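/- (Admissibility of the HGN landmark heuristic.) Let L be a finite set of facts such that every φ ∈ L is a landmark of the relaxed HGN planning problem (s₀, gn₀) and φ ∉ s₀, set ach(φ) = {a : φ ∈ add(a)}, and let (x, c) be a cost partition for (L, ach, cost). Then for every relevance relation rel and every plan π ∈ S(s₀, gn₀), Σ_{φ∈L} c(φ) ≤ cost(π). In particular, Σ_{φ∈L} c(φ) is a lower bound on the cost of a hierarchically optimal solution, i.e., on min{cost(π) : π ∈ S(s₀, gn₀)} whenever S(s₀, gn₀) is nonempty. -/

import Mathlib

open scoped Classical

/-- An action: precondition, add effects, delete effects, and a nonnegative cost. -/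
structure PAction (F : Type*) where
  pre : Set F
  add : Set F
  del : Set F
  cost : NNReal

variable {F : Type*}

/-- The state resulting from applying action `a` in state `s`: `(s \ del a) ∪ add a`. -/
def applyAction (s : Set F) (a : PAction F) : Set F := (s \ a.del) ∪ a.add

/-- A plan is executable from `s` if each action's precondition holds in the state
produced by the previous actions. -/
def Exec : Set F → List (PAction F) → Prop
  | _, [] => True
  | s, a :: rest => a.pre ⊆ s ∧ Exec (applyAction s a) rest

/-- The state obtained by running a plan from `s`. -/
def runPlan : Set F → List (PAction F) → Set F
  | s, [] => s
  | s, a :: rest => runPlan (applyAction s a) rest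

/-- The `i`-th intermediate state `σᵢ` of a plan `π` started in `s`
(the result of executing the first `i` actions). -/
def stateAt (s : Set F) (π : List (PAction F)) (i : ℕ) : Set F := runPlan s (π.take i)

/-- The cost of a plan: the sum of the costs of its actions (with multiplicity). -/
def planCost (π : List (PAction F)) : NNReal := (π.map PAction.cost).sum

/-- A plan solves the classical planning problem `(s₀, g)` (with `g` a set of states)
if it is executable from `s₀` and its final state lies in `g`. -/
def Solves (s₀ : Set F) (g : Set (Set F)) (π : List (PAction F)) : Prop :=
  Exec s₀ π ∧ stateAt s₀ π π.length ∈ g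

/-- A fact `φ` is a landmark of the problem `(s₀, g)` if every solution plan has `φ`
in some intermediate state. -/
def IsLandmark (s₀ : Set F) (g : Set (Set F)) (φ : F) : Prop :=
  ∀ π, Solves s₀ g π → ∃ i ≤ π.length, φ ∈ stateAt s₀ π i

/-- A goal network: a finite set `T` of nodes, an order relation `prec` on the nodes,
and a goal (a set of states) attached to each node. -/
structure GoalNetwork (F : Type*) (ν : Type*) where
  T : Finset ν
  prec : ν → ν → Prop
  goal : ν → Set (Set F)

variable {ν : Type*}

/-- `prec` is a strict partial order on the nodes of the network. -/
def GoalNetwork.IsStrictOrder (gn : GoalNetwork F ν) : Prop :=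
  (∀ t ∈ gn.T, ¬ gn.prec t t) ∧
    (∀ t ∈ gn.T, ∀ u ∈ gn.T, ∀ v ∈ gn.T, gn.prec t u → gn.prec u v → gn.prec t v)

/-- A node is unconstrained if it has no `≺`-predecessor in the network. -/
def Unconstrained (gn : GoalNetwork F ν) (t : ν) : Prop := ∀ u ∈ gn.T, ¬ gn.prec u t

/-- A plan `π` solves the relaxed HGN planning problem `(s₀, gn)` if it is executable from
`s₀` and there is `τ : T → {0,…,n}` with `σ_{τ t} ∈ goal t` for all `t ∈ T` and
`τ t ≤ τ u` whenever `t ≺ u`. -/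
def SolvesRelaxed (s₀ : Set F) (gn : GoalNetwork F ν) (π : List (PAction F)) : Prop :=
  Exec s₀ π ∧ ∃ τ : ν → ℕ,
    (∀ t ∈ gn.T, τ t ≤ π.length ∧ stateAt s₀ π (τ t) ∈ gn.goal t) ∧
    (∀ t ∈ gn.T, ∀ u ∈ gn.T, gn.prec t u → τ t ≤ τ u)

/-- A fact `φ` is a landmark of the relaxed HGN problem `(s₀, gn)` if every plan solving it
has `φ` in some intermediate state. -/
def IsRelaxedLandmark (s₀ : Set F) (gn : GoalNetwork F ν) (φ : F) : Prop :=
  ∀ π, SolvesRelaxed s₀ gn π → ∃ i ≤ π.length, φ ∈ stateAt s₀ π i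

/-- An HGN method: a precondition and a goal network with a distinguished 'last' node `tg`
that is maximal in the network's order. -/
structure Method (F : Type*) (ν : Type*) where
  precond : Set F
  network : GoalNetwork F ν
  tg : ν
  tg_mem : tg ∈ network.T
  tg_max : ∀ u ∈ network.T, ¬ network.prec tg u

/-- Method application `gn ∘ₜ m` (for node sets taken disjoint): the node set is the union of
the two node sets, the order contains both orders together with `tg ≺ t`, and goals are
inherited (from `network m` on its nodes, from `gn` elsewhere). -/
noncomputable def GoalNetwork.applyMethod (gn : GoalNetwork F ν) (t : ν) (m : Method F ν) :
    GoalNetwork F ν where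
  T := gn.T ∪ m.network.T
  prec := fun a b => gn.prec a b ∨ m.network.prec a b ∨ (a = m.tg ∧ b = t)
  goal := fun a => if a ∈ m.network.T then m.network.goal a else gn.goal a

/-- Goal release `gn − t`: remove node `t` and all orderings involving it. -/
noncomputable def GoalNetwork.release (gn : GoalNetwork F ν) (t : ν) : GoalNetwork F ν where
  T := gn.T.erase t
  prec := fun a b => gn.prec a b ∧ a ≠ t ∧ b ≠ t
  goal := gn.goal

/-- The HGN solution set `S(s₀, gn)` (Definition of solutions to HGN planning problems),
relative to relevance relations `relA` (actions) and `relM` (methods). -/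
inductive HGNSol (relA : PAction F → Set (Set F) → Prop)
    (relM : Method F ν → Set (Set F) → Prop) :
    Set F → GoalNetwork F ν → List (PAction F) → Prop
  | base (s : Set F) (gn : GoalNetwork F ν) : gn.T = ∅ → HGNSol relA relM s gn []
  | satisfied (s : Set F) (gn : GoalNetwork F ν) (t : ν) (π : List (PAction F)) :
      t ∈ gn.T → Unconstrained gn t → s ∈ gn.goal t →
      HGNSol relA relM s (gn.release t) π → HGNSol relA relM s gn π
  | action (s : Set F) (gn : GoalNetwork F ν) (t : ν) (a : PAction F) (π : List (PAction F)) :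
      t ∈ gn.T → Unconstrained gn t → a.pre ⊆ s → relA a (gn.goal t) →
      HGNSol relA relM (applyAction s a) gn π → HGNSol relA relM s gn (a :: π)
  | method (s : Set F) (gn : GoalNetwork F ν) (t : ν) (m : Method F ν) (π : List (PAction F)) :
      t ∈ gn.T → Unconstrained gn t → m.precond ⊆ s → relM m (gn.goal t) →
      Disjoint gn.T m.network.T →
      HGNSol relA relM s (gn.applyMethod t m) π → HGNSol relA relM s gn π

/-!
Every HGN solution also solves the relaxed problem (a method application only adds nodes
and orderings, and a released goal holds in the current state), so each landmark `φ ∈ L`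
occurs along it; as `φ ∉ s₀`, some action of the plan adds `φ`. Charging every landmark to
its first achiever in the plan, the cost partition bounds the charge of each action by its
cost.
-/

@[simp]
lemma stateAt_zero (s : Set F) (π : List (PAction F)) : stateAt s π 0 = s := by
  simp [stateAt, runPlan]

@[simp]
lemma stateAt_cons_succ (s : Set F) (a : PAction F) (π : List (PAction F)) (i : ℕ) :
    stateAt s (a :: π) (i + 1) = stateAt (applyAction s a) π i := by
  simp [stateAt, runPlan]

section Relaxed

variable {s : Set F} {gn : GoalNetwork F ν} {π : List (PAction F)}

lemma SolvesRelaxed.of_empty (hT : gn.T = ∅) : SolvesRelaxed s gn [] :=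
  ⟨trivial, fun _ => 0, by simp [hT], by simp [hT]⟩

lemma SolvesRelaxed.of_release {t : ν} (hunc : Unconstrained gn t) (hgoal : s ∈ gn.goal t)
    (h : SolvesRelaxed s (gn.release t) π) : SolvesRelaxed s gn π := by
  obtain ⟨hexec, τ, hτ_goal, hτ_mono⟩ := h
  -- the released node is scheduled at the very start, before all of its successors
  refine ⟨hexec, fun u => if u = t then 0 else τ u, fun u hu => ?_, fun u hu v hv huv => ?_⟩
  · by_cases hut : u = t
    · subst hut; simp [hgoal]
    · simpa [hut, GoalNetwork.release] using hτ_goal u (Finset.mem_erase.mpr ⟨hut, hu⟩)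
  · have hvt : v ≠ t := fun hvt => hunc u hu (hvt ▸ huv)
    by_cases hut : u = t
    · simp [hut]
    · simpa [hut, hvt] using hτ_mono u (Finset.mem_erase.mpr ⟨hut, hu⟩) v
        (Finset.mem_erase.mpr ⟨hvt, hv⟩) ⟨huv, hut, hvt⟩

lemma SolvesRelaxed.cons {a : PAction F} (hpre : a.pre ⊆ s)
    (h : SolvesRelaxed (applyAction s a) gn π) : SolvesRelaxed s gn (a :: π) := by
  obtain ⟨hexec, τ, hτ_goal, hτ_mono⟩ := h
  refine ⟨⟨hpre, hexec⟩, fun u => τ u + 1, fun u hu => ?_,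
    fun u hu v hv huv => Nat.add_le_add_right (hτ_mono u hu v hv huv) 1⟩
  obtain ⟨hlen, hgoal⟩ := hτ_goal u hu
  exact ⟨by simpa using hlen, by simpa using hgoal⟩

lemma SolvesRelaxed.of_applyMethod {t : ν} {m : Method F ν} (hdisj : Disjoint gn.T m.network.T)
    (h : SolvesRelaxed s (gn.applyMethod t m) π) : SolvesRelaxed s gn π := by
  obtain ⟨hexec, τ, hτ_goal, hτ_mono⟩ := h
  refine ⟨hexec, τ, fun u hu => ?_, fun u hu v hv huv => ?_⟩
  · have hu_new : u ∉ m.network.T := Finset.disjoint_left.mp hdisj hu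
    simpa [GoalNetwork.applyMethod, hu_new] using hτ_goal u (Finset.mem_union_left _ hu)
  · exact hτ_mono u (Finset.mem_union_left _ hu) v (Finset.mem_union_left _ hv) (Or.inl huv)

lemma HGNSol.solvesRelaxed {relA : PAction F → Set (Set F) → Prop}
    {relM : Method F ν → Set (Set F) → Prop} (h : HGNSol relA relM s gn π) :
    SolvesRelaxed s gn π := by
  induction h with
  | base _ _ hT => exact .of_empty hT
  | satisfied _ _ _ _ _ hunc hgoal _ ih => exact ih.of_release hunc hgoal
  | action _ _ _ _ _ _ _ hpre _ _ ih => exact ih.cons hpre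
  | method _ _ _ _ _ _ _ _ _ hdisj _ ih => exact ih.of_applyMethod hdisj

end Relaxed

section Achievers

lemma exists_mem_add_of_mem_runPlan {s : Set F} {π : List (PAction F)} {φ : F}
    (h : φ ∈ runPlan s π) (hφ : φ ∉ s) : ∃ a ∈ π, φ ∈ a.add := by
  induction π generalizing s with
  | nil => exact absurd h hφ
  | cons a π ih =>
    by_cases hadd : φ ∈ a.add
    · exact ⟨a, List.mem_cons_self, hadd⟩
    · have hφ' : φ ∉ applyAction s a := by
        rintro (⟨hs, -⟩ | ha)
        exacts [hφ hs, hadd ha]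
      obtain ⟨b, hb, hbφ⟩ := ih h hφ'
      exact ⟨b, List.mem_cons_of_mem a hb, hbφ⟩

lemma IsRelaxedLandmark.exists_mem_add {s : Set F} {gn : GoalNetwork F ν} {φ : F}
    {π : List (PAction F)} (hφ : IsRelaxedLandmark s gn φ) (hφs : φ ∉ s)
    (hπ : SolvesRelaxed s gn π) : ∃ a ∈ π, φ ∈ a.add := by
  obtain ⟨i, -, hi⟩ := hφ π hπ
  obtain ⟨a, ha, hφa⟩ := exists_mem_add_of_mem_runPlan hi hφs
  exact ⟨a, List.mem_of_mem_take ha, hφa⟩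

lemma sum_le_sum_map_sum_filter_add (c : F → NNReal) :
    ∀ (π : List (PAction F)) (L : Finset F), (∀ φ ∈ L, ∃ a ∈ π, φ ∈ a.add) →
      ∑ φ ∈ L, c φ ≤ (π.map fun a => ∑ φ ∈ L.filter (fun φ => φ ∈ a.add), c φ).sum
  | [], L, hL => by
    have : L = ∅ := Finset.eq_empty_of_forall_notMem fun φ hφ => by simpa using hL φ hφ
    simp [this]
  | a :: π, L, hL => by
    have hrest : ∀ φ ∈ L.filter (fun φ => φ ∉ a.add), ∃ b ∈ π, φ ∈ b.add := by
      intro φ hφ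
      obtain ⟨hφL, hφa⟩ := Finset.mem_filter.mp hφ
      obtain ⟨b, hb, hφb⟩ := hL φ hφL
      rcases List.mem_cons.mp hb with rfl | hb
      exacts [absurd hφb hφa, ⟨b, hb, hφb⟩]
    have hmono : ∀ b ∈ π, ∑ φ ∈ (L.filter fun φ => φ ∉ a.add).filter (fun φ => φ ∈ b.add), c φ
        ≤ ∑ φ ∈ L.filter (fun φ => φ ∈ b.add), c φ := fun b _ =>
      Finset.sum_le_sum_of_subset (Finset.filter_subset_filter _ (Finset.filter_subset _ _))
    calc ∑ φ ∈ L, c φ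
        = ∑ φ ∈ L.filter (fun φ => φ ∈ a.add), c φ
          + ∑ φ ∈ L.filter (fun φ => φ ∉ a.add), c φ :=
          (Finset.sum_filter_add_sum_filter_not L _ c).symm
      _ ≤ ∑ φ ∈ L.filter (fun φ => φ ∈ a.add), c φ
          + (π.map fun b => ∑ φ ∈ L.filter (fun φ => φ ∈ b.add), c φ).sum := by
          gcongr
          exact (sum_le_sum_map_sum_filter_add c π _ hrest).trans (List.sum_le_sum hmono)
      _ = _ := by simp

lemma sum_le_planCost_of_costPartition {L : Finset F} {x : PAction F → F → NNReal}
    {c : F → NNReal} (hx : ∀ a : PAction F, ∑ φ ∈ L.filter (fun φ => φ ∈ a.add), x a φ ≤ a.cost)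
    (hc : ∀ φ ∈ L, ∀ a : PAction F, φ ∈ a.add → c φ ≤ x a φ) {π : List (PAction F)}
    (hπ : ∀ φ ∈ L, ∃ a ∈ π, φ ∈ a.add) : ∑ φ ∈ L, c φ ≤ planCost π := by
  have hcharge : ∀ a ∈ π, ∑ φ ∈ L.filter (fun φ => φ ∈ a.add), c φ ≤ a.cost := fun a _ =>
    (Finset.sum_le_sum fun φ hφ => hc φ (Finset.mem_filter.mp hφ).1 a
      (Finset.mem_filter.mp hφ).2).trans (hx a)
  exact (sum_le_sum_map_sum_filter_add c π L hπ).trans (List.sum_le_sum hcharge)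

end Achievers

theorem hHL_admissible_general (s₀ : Set F) (gn₀ : GoalNetwork F ν)
    (L : Finset F)
    (hL : ∀ φ ∈ L, IsRelaxedLandmark s₀ gn₀ φ ∧ φ ∉ s₀)
    (x : PAction F → F → NNReal) (c : F → NNReal)
    (hx : ∀ a : PAction F, ∑ φ ∈ L.filter (fun φ => φ ∈ a.add), x a φ ≤ a.cost)
    (hc : ∀ φ ∈ L, ∀ a : PAction F, φ ∈ a.add → c φ ≤ x a φ)
    (relA : PAction F → Set (Set F) → Prop) (relM : Method F ν → Set (Set F) → Prop) :
    (∀ π : List (PAction F), HGNSol relA relM s₀ gn₀ π → ∑ φ ∈ L, c φ ≤ planCost π) ∧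
    ((∃ π : List (PAction F), HGNSol relA relM s₀ gn₀ π) →
      ∑ φ ∈ L, c φ ≤ sInf {r : NNReal | ∃ π, HGNSol relA relM s₀ gn₀ π ∧ planCost π = r}) := by
  have hbound : ∀ π, HGNSol relA relM s₀ gn₀ π → ∑ φ ∈ L, c φ ≤ planCost π :=
    fun π hπ => sum_le_planCost_of_costPartition hx hc fun φ hφ =>
      (hL φ hφ).1.exists_mem_add (hL φ hφ).2 hπ.solvesRelaxed
  refine ⟨hbound, fun ⟨π, hπ⟩ => le_csInf ⟨planCost π, π, hπ, rfl⟩ ?_⟩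
  rintro r ⟨π, hπ, rfl⟩
  exact hbound π hπ

/-- Admissibility of the HGN landmark heuristic: given landmarks `L` of the relaxed HGN
problem not holding initially, achievers `ach φ = {a | φ ∈ add a}` and a cost partition
`(x, c)`, the value `Σ_{φ∈L} c φ` is a lower bound on the cost of every HGN solution (for
any relevance relations), hence on the cost of a hierarchically optimal solution. -/
theorem hHL_admissible (s₀ : Set F) (gn₀ : GoalNetwork F ν)
    (hstrict : gn₀.IsStrictOrder) (L : Finset F)
    (hL : ∀ φ ∈ L, IsRelaxedLandmark s₀ gn₀ φ ∧ φ ∉ s₀)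
    (x : PAction F → F → NNReal) (c : F → NNReal)
    (hx : ∀ a : PAction F, ∑ φ ∈ L.filter (fun φ => φ ∈ a.add), x a φ ≤ a.cost)
    (hc : ∀ φ ∈ L, ∀ a : PAction F, φ ∈ a.add → c φ ≤ x a φ)
    (relA : PAction F → Set (Set F) → Prop) (relM : Method F ν → Set (Set F) → Prop) :
    (∀ π : List (PAction F), HGNSol relA relM s₀ gn₀ π → ∑ φ ∈ L, c φ ≤ planCost π) ∧
    ((∃ π : List (PAction F), HGNSol relA relM s₀ gn₀ π) →
      ∑ φ ∈ L, c φ ≤ sInf {r : NNReal | ∃ π, HGNSol relA relM s₀ gn₀ π ∧ planCost π = r}) :=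
  hHL_admissible_general s₀ gn₀ L hL x c hx hc relA relM
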